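/- Let π be a finitely generated group and let R = ℤ[π] denote its integral group ring (the monoid algebra of π over ℤ). Let A be a finitely generated left R-module and let φ : A → ℤ/2ℤ be a homomorphism of π-modules, i.e. an additive group homomorphism satisfying φ(g • a) = φ(a) for every g ∈ π and a ∈ A (the π-action on ℤ/2ℤ being necessarily trivial). Then the kernel ker φ = {a ∈ A : φ(a) = 0} is a finitely generated R-submodule of A. -/

import Mathlib

/-!
The augmentation ideal `I` of `ℤ[π]` is generated as a left ideal by the elements `g - 1` with
`g` running over a finite generating set of `π`, so `I • A` is a finitely generated submodule
of `A`. The quotient `A ⧸ I • A` is a finitely generated module over `ℤ[π] ⧸ I ≅ ℤ`, hence a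
noetherian `ℤ[π]`-module. Since `φ` is `π`-invariant, `ker φ` contains `I • A`, and it is
finitely generated because both `I • A` and its image in the noetherian quotient are.
-/

namespace Submodule

variable {R M : Type*} [Ring R] [AddCommGroup M] [Module R M]

theorem FG.of_le_of_isNoetherian_quotient {N K : Submodule R M} (hN : N.FG) (hNK : N ≤ K)
    [IsNoetherian R (M ⧸ N)] : K.FG :=
  fg_of_fg_map_of_fg_inf_ker N.mkQ (IsNoetherian.noetherian _) <| by
    rwa [ker_mkQ, inf_eq_right.2 hNK]

end Submodule

namespace AlgHom

variable {k R : Type*} [CommRing k] [Ring R] [Algebra k R] (ε : R →ₐ[k] k)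

instance finite_quotient_ker : Module.Finite k (R ⧸ RingHom.ker ε) :=
  .equiv (Ideal.quotientKerAlgEquivOfRightInverse (g := algebraMap k R)
    fun x ↦ by simp).symm.toLinearEquiv

theorem finite_quotient_ker_smul_top (M : Type*) [AddCommGroup M] [Module R M] [Module k M]
    [IsScalarTower k R M] [Module.Finite R M] :
    Module.Finite k (M ⧸ RingHom.ker ε • (⊤ : Submodule R M)) :=
  have : Module.Finite (R ⧸ RingHom.ker ε) (M ⧸ RingHom.ker ε • (⊤ : Submodule R M)) :=
    .of_restrictScalars_finite R _ _
  .trans (R ⧸ RingHom.ker ε) _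

end AlgHom

namespace MonoidAlgebra

noncomputable def augmentation (k G : Type*) [CommSemiring k] [Monoid G] :
    MonoidAlgebra k G →ₐ[k] k :=
  lift k k G 1

theorem augmentation_of {k G : Type*} [CommSemiring k] [Monoid G] (g : G) :
    augmentation k G (of k G g) = 1 :=
  lift_of _ g

section Group

variable {k G : Type*} [CommRing k] [Group G] {S : Set G}

theorem of_sub_one_mem_span_of_closure_eq_top (hS : Subgroup.closure S = ⊤) (g : G) :
    of k G g - 1 ∈ Ideal.span ((fun g ↦ of k G g - 1) '' S) := by
  have hg : g ∈ Subgroup.closure S := hS ▸ Subgroup.mem_top g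
  induction hg using Subgroup.closure_induction with
  | mem x hx => exact Ideal.subset_span ⟨x, hx, rfl⟩
  | one => rw [map_one, sub_self]; exact zero_mem _
  | mul x y _ _ hx hy =>
    have : of k G (x * y) - 1 = of k G x * (of k G y - 1) + (of k G x - 1) := by
      rw [map_mul, mul_sub, mul_one, sub_add_sub_cancel]
    rw [this]
    exact add_mem (Ideal.mul_mem_left _ _ hy) hx
  | inv x _ hx =>
    have : of k G x⁻¹ - 1 = -(of k G x⁻¹ * (of k G x - 1)) := by
      rw [mul_sub, ← map_mul, inv_mul_cancel, map_one, mul_one, neg_sub]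
    rw [this]
    exact neg_mem (Ideal.mul_mem_left _ _ hx)

theorem sub_algebraMap_augmentation_mem_span (hS : Subgroup.closure S = ⊤)
    (r : MonoidAlgebra k G) :
    r - algebraMap k (MonoidAlgebra k G) (augmentation k G r) ∈
      Ideal.span ((fun g ↦ of k G g - 1) '' S) := by
  induction r using MonoidAlgebra.induction_on with
  | of g =>
    rw [augmentation_of, map_one]
    exact of_sub_one_mem_span_of_closure_eq_top hS g
  | add f g hf hg =>
    rw [map_add, map_add, add_sub_add_comm]
    exact add_mem hf hg
  | smul c f hf =>
    rw [map_smul, smul_eq_mul, map_mul, ← Algebra.smul_def, ← smul_sub]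
    exact Submodule.smul_of_tower_mem _ c hf

theorem ker_augmentation_eq_span (hS : Subgroup.closure S = ⊤) :
    RingHom.ker (augmentation k G) = Ideal.span ((fun g ↦ of k G g - 1) '' S) := by
  refine le_antisymm (fun r hr ↦ ?_) (Ideal.span_le.2 ?_)
  · simpa [RingHom.mem_ker.1 hr] using sub_algebraMap_augmentation_mem_span hS r
  · rintro _ ⟨g, -, rfl⟩
    rw [SetLike.mem_coe, RingHom.mem_ker, map_sub, augmentation_of, map_one, sub_self]

theorem fg_ker_augmentation [Group.FG G] : (RingHom.ker (augmentation k G)).FG := by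
  obtain ⟨S, hS⟩ := Group.FG.out (G := G)
  rw [ker_augmentation_eq_span hS, ← Set.Finite.coe_toFinset (S.finite_toSet.image _)]
  exact ⟨_, rfl⟩

end Group

section InvariantHom

variable {G M B : Type*} [Monoid G] [AddCommGroup M] [Module (MonoidAlgebra ℤ G) M]
  [AddCommGroup B] (φ : M →+ B)

theorem map_smul_eq_augmentation_smul (hφ : ∀ (g : G) (a : M), φ (of ℤ G g • a) = φ a)
    (r : MonoidAlgebra ℤ G) (a : M) :
    φ (r • a) = augmentation ℤ G r • φ a := by
  induction r using MonoidAlgebra.induction_on with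
  | of g => rw [hφ, augmentation_of, one_smul]
  | add f g hf hg => rw [add_smul, map_add, map_add, hf, hg, add_smul]
  | smul n f hf => rw [smul_assoc, map_zsmul, hf, map_zsmul, smul_assoc]

def invariantKer (hφ : ∀ (g : G) (a : M), φ (of ℤ G g • a) = φ a) :
    Submodule (MonoidAlgebra ℤ G) M where
  toAddSubmonoid := φ.ker.toAddSubmonoid
  smul_mem' r a (ha : φ a = 0) := by
    change φ (r • a) = 0
    rw [map_smul_eq_augmentation_smul φ hφ, ha, smul_zero]

theorem ker_augmentation_smul_top_le_invariantKer
    (hφ : ∀ (g : G) (a : M), φ (of ℤ G g • a) = φ a) :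
    RingHom.ker (augmentation ℤ G) • (⊤ : Submodule _ M) ≤ invariantKer φ hφ :=
  Submodule.smul_le.2 fun r hr a _ ↦ by
    change φ (r • a) = 0
    rw [map_smul_eq_augmentation_smul φ hφ, RingHom.mem_ker.1 hr, zero_smul]

end InvariantHom

end MonoidAlgebra

/-- Let `π` be a finitely generated group and `R = ℤ[π]` its integral
group ring.  Let `A` be a finitely generated left `R`-module and `φ : A → ℤ/2` an
additive homomorphism satisfying `φ (g • a) = φ a` for all `g ∈ π` (a homomorphism of
`π`-modules, the action on `ℤ/2` being trivial).  Then the kernel `{a | φ a = 0}` is a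
finitely generated `R`-submodule of `A`. -/
theorem kernel_fg_of_pi_module_hom_to_Z2
    (π : Type*) [Group π] [Group.FG π]
    (A : Type*) [AddCommGroup A] [Module (MonoidAlgebra ℤ π) A]
    [Module.Finite (MonoidAlgebra ℤ π) A]
    (φ : A →+ ZMod 2)
    (hφ : ∀ (g : π) (a : A), φ ((MonoidAlgebra.of ℤ π g) • a) = φ a) :
    ∃ s : Finset A,
      (Submodule.span (MonoidAlgebra ℤ π) (s : Set A) : Set A) = {a : A | φ a = 0} := by
  let I := RingHom.ker (MonoidAlgebra.augmentation ℤ π)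
  let N : Submodule (MonoidAlgebra ℤ π) A := I • ⊤
  have hN : N.FG := Submodule.FG.smul MonoidAlgebra.fg_ker_augmentation Module.Finite.fg_top
  have := (MonoidAlgebra.augmentation ℤ π).finite_quotient_ker_smul_top A
  have : IsNoetherian (MonoidAlgebra ℤ π) (A ⧸ N) := isNoetherian_of_tower ℤ inferInstance
  obtain ⟨s, hs⟩ := hN.of_le_of_isNoetherian_quotient
    (MonoidAlgebra.ker_augmentation_smul_top_le_invariantKer φ hφ)
  exact ⟨s, congrArg SetLike.coe hs⟩
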